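/- arXiv:2512.00416 — 2 statements merged into one kernel-verified Lean document; each statement's English description precedes it below -/
import Mathlib

section
/- Define a^{(λ,δ)}_{n,k} by a^{(λ,δ)}_{1,0} = 1, a^{(λ,δ)}_{1,k} = 0 for k ≠ 0, and a^{(λ,δ)}_{n+1,j} = Σ_{k=0}^{min(j, λ(n−1))} (λn−k)_{j−k} · C(j−k+δ−1, δ−1) · a^{(λ,δ)}_{n,k}. Then for all integers λ, δ ≥ 1, n ≥ 1, and every polynomial f, (x^λ ∘ I^δ)ⁿ(f)(x) = Σ_{k=0}^{λ(n−1)} (−1)^k a^{(λ,δ)}_{n,k} · x^{λn−k} · I^{δn+k}(f)(x). -/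
open Polynomial Finset

/-- The integration operator `f ↦ ∫₀ˣ f(t) dt` on rational polynomials. -/
noncomputable def intOp (f : Polynomial ℚ) : Polynomial ℚ :=
  f.sum (fun n a => Polynomial.C (a / (n + 1)) * Polynomial.X ^ (n + 1))

/-- The generalized normal-ordering coefficients `a^{(λ,δ)}_{n,k}`:
`a_{1,0} = 1`, `a_{1,k} = 0` for `k ≠ 0`, and
`a_{n+1,j} = Σ_{k=0}^{min(j, λ(n−1))} (λn−k)_{j−k} C(j−k+δ−1, δ−1) a_{n,k}`. -/
def gcoef (lam del : ℕ) : ℕ → ℕ → ℕ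
  | 0, _ => 0
  | 1, k => if k = 0 then 1 else 0
  | n + 2, j =>
      ∑ k ∈ Finset.range (min j (lam * n) + 1),
        Nat.descFactorial (lam * (n + 1) - k) (j - k) *
          Nat.choose (j - k + del - 1) (del - 1) * gcoef lam del (n + 1) k

lemma intOp_monomial (n : ℕ) (a : ℚ) :
    intOp (monomial n a) = monomial (n+1) (a/(n+1)) := by
  unfold intOp
  rw [Polynomial.sum_monomial_index _ _ (by simp)]
  simp [C_mul_X_pow_eq_monomial]

lemma intOp_add (p q : Polynomial ℚ) : intOp (p + q) = intOp p + intOp q := by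
  unfold intOp
  rw [Polynomial.sum_add_index _ _ _ (by simp)
    (by intro n a b; rw [add_div, C_add, add_mul])]

lemma intOp_C_mul (c : ℚ) (p : Polynomial ℚ) : intOp (C c * p) = C c * intOp p := by
  rw [← smul_eq_C_mul, ← smul_eq_C_mul]
  unfold intOp
  rw [Polynomial.sum_smul_index _ _ _ (by simp)]
  rw [Polynomial.sum, Polynomial.sum, Finset.smul_sum]
  refine Finset.sum_congr rfl fun n _ => ?_
  rw [smul_eq_C_mul, mul_div_assoc, C_mul, mul_assoc]

lemma iter_add (d : ℕ) (p q : Polynomial ℚ) :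
    intOp^[d] (p + q) = intOp^[d] p + intOp^[d] q := by
  induction d generalizing p q with
  | zero => simp
  | succ d ih => simp [Function.iterate_succ_apply, intOp_add, ih]

lemma iter_C_mul (d : ℕ) (c : ℚ) (p : Polynomial ℚ) :
    intOp^[d] (C c * p) = C c * intOp^[d] p := by
  induction d generalizing p with
  | zero => simp
  | succ d ih => simp [Function.iterate_succ_apply, intOp_C_mul, ih]

lemma iter_sum {α : Type*} (d : ℕ) (s : Finset α) (g : α → Polynomial ℚ) :
    intOp^[d] (∑ x ∈ s, g x) = ∑ x ∈ s, intOp^[d] (g x) := by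
  classical
  induction s using Finset.induction with
  | empty => simpa using iter_C_mul d 0 0
  | @insert a s h ih => rw [Finset.sum_insert h, Finset.sum_insert h, iter_add, ih]

lemma intOp_X_mul (g : Polynomial ℚ) :
    intOp (X * g) = X * intOp g - intOp (intOp g) := by
  induction g using Polynomial.induction_on' with
  | add p q hp hq =>
      rw [mul_add, intOp_add, hp, hq, intOp_add, intOp_add]
      ring
  | monomial n a =>
      rw [X_mul_monomial, intOp_monomial, intOp_monomial, intOp_monomial,
        X_mul_monomial, ← monomial_sub]
      congr 1
      have h1 : ((n:ℚ) + 1) ≠ 0 := by positivity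
      have h2 : ((n:ℚ) + 1 + 1) ≠ 0 := by positivity
      push_cast
      field_simp
      ring

lemma intOp_sub (p q : Polynomial ℚ) : intOp (p - q) = intOp p - intOp q := by
  have : p - q = p + C (-1) * q := by rw [map_neg, map_one]; ring
  rw [this, intOp_add, intOp_C_mul, map_neg, map_one]; ring

lemma iter_sub (d : ℕ) (p q : Polynomial ℚ) :
    intOp^[d] (p - q) = intOp^[d] p - intOp^[d] q := by
  have : p - q = p + C (-1) * q := by rw [map_neg, map_one]; ring
  rw [this, iter_add, iter_C_mul, map_neg, map_one]; ring

lemma iter_X_mul (d : ℕ) (g : Polynomial ℚ) :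
    intOp^[d] (X * g) = X * intOp^[d] g - C (d : ℚ) * intOp^[d+1] g := by
  induction d generalizing g with
  | zero => simp
  | succ d ih =>
      rw [Function.iterate_succ_apply, intOp_X_mul, iter_sub, ih,
        ← Function.iterate_succ_apply, ← Function.iterate_succ_apply,
        ← Function.iterate_succ_apply]
      simp only [Nat.cast_add, Nat.cast_one, C_add, C_1, Nat.succ_eq_add_one,
        show 1+d = d+1 from by omega]
      have e1 : intOp^[d+1] (intOp g) = intOp^[d+2] g := by
        rw [← Function.iterate_succ_apply]
      rw [e1, show d+1+1 = d+2 from by omega]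
      ring

lemma key_choose (j e : ℕ) :
    (j+1) * (j+e+1).choose e = (e+1) * (j+e+1).choose (e+1) := by
  have h1 := Nat.add_one_mul_choose_eq (j+e) e
  have h2 := Nat.add_one_mul_choose_eq (j+e) j
  have h3 : (j+e).choose e = (j+e).choose j := by
    have := Nat.choose_symm (n := j+e) (k := j) (by omega)
    simpa [show j+e-j = e from by omega] using this
  have h4 : (j+e+1).choose e = (j+e+1).choose (j+1) := by
    have := Nat.choose_symm (n := j+e+1) (k := j+1) (by omega)
    simpa [show j+e+1-(j+1) = e from by omega] using this
  calc (j+1) * (j+e+1).choose e = (j+1) * (j+e+1).choose (j+1) := by rw [h4]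
    _ = (j+e+1).choose (j+1) * (j+1) := by ring
    _ = (j+e).succ * (j+e).choose j := by
        rw [← h2]
    _ = (j+e).succ * (j+e).choose e := by rw [h3]
    _ = (j+e+1).choose (e+1) * (e+1) := by rw [← h1]
    _ = (e+1) * (j+e+1).choose (e+1) := by ring

lemma nat_coef (m j e : ℕ) :
    (m+1).descFactorial (j+1) * (j+e+1).choose e
      = m.descFactorial (j+1) * (j+e+1).choose e
        + (e+1) * (m.descFactorial j * (j+e+1).choose (e+1)) := by
  rw [Nat.succ_descFactorial_succ, Nat.descFactorial_succ]
  rcases le_or_gt j m with h | h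
  · have hk : (e+1) * (j+e+1).choose (e+1) = (j+1) * (j+e+1).choose e :=
      (key_choose j e).symm
    have : (e+1) * (m.descFactorial j * (j+e+1).choose (e+1))
        = (j+1) * (m.descFactorial j * (j+e+1).choose e) := by
      rw [mul_left_comm, hk]; ring
    rw [this]
    have hm : m + 1 = (m-j) + (j+1) := by omega
    rw [hm]; ring
  · have h0 : m.descFactorial j = 0 := Nat.descFactorial_eq_zero_iff_lt.mpr h
    simp [h0]

lemma comm_lemma (m : ℕ) : ∀ (d : ℕ), 1 ≤ d → ∀ (g : Polynomial ℚ),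
    intOp^[d] (X^m * g) = ∑ j ∈ range (m+1),
      (-1:ℚ[X])^j * ((m.descFactorial j * (j + d - 1).choose (d-1) : ℕ) : ℚ[X])
        * X^(m-j) * intOp^[d+j] g := by
  induction m with
  | zero =>
      intro d hd g
      simp [Nat.choose_self]
  | succ m ih =>
      intro d hd g
      have hstep : X ^ (m+1) * g = X * (X^m * g) := by rw [← mul_assoc, ← pow_succ']
      rw [hstep, iter_X_mul, ih d hd, ih (d+1) (by omega), Finset.mul_sum, Finset.mul_sum,
        ← Finset.sum_sub_distrib]
      have hCd : (C (d:ℚ) : ℚ[X]) = ((d:ℕ) : ℚ[X]) := by simp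
      -- abbreviations
      set A : ℕ → ℚ[X] := fun j =>
        (-1:ℚ[X])^j * ((m.descFactorial j * (j + d - 1).choose (d-1) : ℕ) : ℚ[X])
          * X^(m+1-j) * intOp^[d+j] g with hAdef
      set B : ℕ → ℚ[X] := fun j =>
        ((d:ℕ) : ℚ[X]) * ((-1:ℚ[X])^j * ((m.descFactorial j * (j + (d+1) - 1).choose ((d+1)-1) : ℕ) : ℚ[X])
          * X^(m-j) * intOp^[(d+1)+j] g) with hBdef
      have step1 : (∑ j ∈ range (m+1),
          (X * ((-1:ℚ[X])^j * ((m.descFactorial j * (j + d - 1).choose (d-1) : ℕ) : ℚ[X])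
              * X^(m-j) * intOp^[d+j] g)
            - C (d:ℚ) * ((-1:ℚ[X])^j * ((m.descFactorial j * (j + (d+1) - 1).choose ((d+1)-1) : ℕ) : ℚ[X])
              * X^(m-j) * intOp^[(d+1)+j] g)))
          = ∑ j ∈ range (m+1), (A j - B j) := by
        refine Finset.sum_congr rfl fun j hj => ?_
        simp only [Finset.mem_range] at hj
        rw [hCd]
        simp only [hAdef, hBdef]
        rw [show m+1-j = (m-j)+1 from by omega, pow_succ]
        ring
      rw [step1, Finset.sum_sub_distrib]
      have hA2 : (∑ j ∈ range (m+1), A j) = ∑ j ∈ range (m+2), A j := by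
        rw [Finset.sum_range_succ (f := A) (n := m+1)]
        have h0 : m.descFactorial (m+1) = 0 := Nat.descFactorial_eq_zero_iff_lt.mpr (by omega)
        simp [hAdef, h0]
      have hB2 : (∑ j ∈ range (m+1), B j)
          = ∑ j ∈ range (m+2), (if j = 0 then 0 else B (j-1)) := by
        rw [Finset.sum_range_succ' (f := fun j => if j = 0 then 0 else B (j-1)) (n := m+1)]
        simp
      rw [hA2, hB2, ← Finset.sum_sub_distrib]
      refine Finset.sum_congr rfl fun j hj => ?_
      simp only [Finset.mem_range] at hj
      match j with
      | 0 => simp [hAdef]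
      | j+1 =>
          simp only [Nat.add_sub_cancel, if_neg (Nat.succ_ne_zero j), hAdef, hBdef]
          obtain ⟨e, rfl⟩ : ∃ e, d = e + 1 := ⟨d - 1, by omega⟩
          rw [show (j+1) + (e+1) - 1 = j+e+1 from by omega,
            show j + (e+1+1) - 1 = j+e+1 from by omega,
            show (e+1) - 1 = e from by omega,
            show m+1-(j+1) = m-j from by omega,
            show (e+1+1) + j = (e+1) + (j+1) from by omega]
          have hcast := congrArg (Nat.cast : ℕ → ℚ[X]) (nat_coef m j e)
          push_cast at hcast ⊢
          linear_combination ((-1:ℚ[X])^j * (X^(m-j) * intOp^[(e+1)+(j+1)] g)) * hcast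

theorem normal_ordering_general_pow (lam del n : ℕ) (hlam : 1 ≤ lam) (hdel : 1 ≤ del)
    (hn : 1 ≤ n) (f : Polynomial ℚ) :
    (fun g => X ^ lam * intOp^[del] g)^[n] f =
      ∑ k ∈ Finset.range (lam * (n - 1) + 1),
        Polynomial.C ((-1 : ℚ) ^ k * (gcoef lam del n k : ℚ)) * X ^ (lam * n - k) *
          intOp^[del * n + k] f := by
  induction n, hn using Nat.le_induction with
  | base =>
      rw [Function.iterate_one]
      simp [gcoef, Finset.sum_range_one]
  | succ n hn ih =>
      obtain ⟨m, rfl⟩ : ∃ m, n = m + 1 := ⟨n - 1, by omega⟩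
      clear hn
      have hsl : lam*(m+2) = lam*(m+1) + lam := by rw [Nat.mul_succ]
      have hsd : del*(m+2) = del*(m+1) + del := by rw [Nat.mul_succ]
      rw [Function.iterate_succ_apply']
      show X ^ lam * intOp^[del] ((fun g => X ^ lam * intOp^[del] g)^[m+1] f) = _
      rw [ih, iter_sum, Finset.mul_sum]
      simp only [Nat.add_sub_cancel]
      -- the reindexed term
      set F : ℕ → ℕ → ℚ[X] := fun k j =>
        (-1:ℚ[X])^j * ((gcoef lam del (m+1) k : ℕ) : ℚ[X])
          * (((lam*(m+1) - k).descFactorial (j-k) * (j-k+del-1).choose (del-1) : ℕ) : ℚ[X])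
          * X^(lam*(m+2) - j) * intOp^[del*(m+2)+j] f with hF
      have h1 : ∀ k ∈ Finset.range (lam * m + 1),
          X ^ lam * intOp^[del]
            (Polynomial.C ((-1 : ℚ) ^ k * (gcoef lam del (m+1) k : ℚ)) * X ^ (lam * (m+1) - k) *
              intOp^[del * (m+1) + k] f)
          = ∑ j ∈ Finset.Ico k (lam*(m+1)+1), F k j := by
        intro k hk
        simp only [Finset.mem_range] at hk
        have hkn : k ≤ lam * (m+1) :=
          le_trans (show k ≤ lam * m by omega)
            (Nat.mul_le_mul (le_refl lam) (by omega))
        rw [mul_assoc, iter_C_mul, comm_lemma _ del hdel, Finset.mul_sum, Finset.mul_sum,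
          Finset.sum_Ico_eq_sum_range,
          show lam*(m+1)+1-k = lam*(m+1)-k+1 from by omega]
        refine Finset.sum_congr rfl fun i hi => ?_
        simp only [Finset.mem_range] at hi
        simp only [hF, Nat.add_sub_cancel_left]
        have e1 : del + i + (del*(m+1)+k) = del*(m+2)+(k+i) := by omega
        have e2 : lam*(m+2)-(k+i) = lam + (lam*(m+1)-k-i) := by omega
        rw [← Function.iterate_add_apply, e1, e2, pow_add, pow_add]
        simp only [map_mul, map_pow, map_neg, map_one, map_natCast]
        ring
      rw [Finset.sum_congr rfl h1]
      have h2 : ∀ k ∈ Finset.range (lam * m + 1),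
          (∑ j ∈ Finset.Ico k (lam*(m+1)+1), F k j)
          = ∑ j ∈ Finset.range (lam*(m+1)+1), if k ≤ j then F k j else 0 := by
        intro k _
        have hset : Finset.Ico k (lam*(m+1)+1)
            = (Finset.range (lam*(m+1)+1)).filter (fun j => k ≤ j) := by
          ext x
          simp only [Finset.mem_Ico, Finset.mem_filter, Finset.mem_range]
          omega
        rw [hset, Finset.sum_filter]
      rw [Finset.sum_congr rfl h2, Finset.sum_comm]
      refine Finset.sum_congr rfl fun j hj => ?_
      simp only [Finset.mem_range] at hj
      have h3 : (∑ k ∈ Finset.range (lam * m + 1), if k ≤ j then F k j else 0)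
          = ∑ k ∈ Finset.range (min j (lam*m) + 1), F k j := by
        rw [← Finset.sum_subset (Finset.range_subset_range.mpr (by omega : min j (lam*m) + 1 ≤ lam*m+1))
          (fun x hx hx' => ?_)]
        · refine Finset.sum_congr rfl fun k hk => ?_
          simp only [Finset.mem_range] at hk
          rw [if_pos (by omega)]
        · simp only [Finset.mem_range] at hx hx'
          rw [if_neg (by omega)]
      rw [h3]
      have hg : gcoef lam del (m+1+1) j
          = ∑ k ∈ Finset.range (min j (lam*m) + 1),
              Nat.descFactorial (lam*(m+1) - k) (j-k) *
                Nat.choose (j-k+del-1) (del-1) * gcoef lam del (m+1) k := rfl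
      have hgc : ((gcoef lam del (m+1+1) j : ℕ) : ℚ[X])
          = ∑ k ∈ Finset.range (min j (lam*m) + 1),
              (((lam*(m+1) - k).descFactorial (j-k) * (j-k+del-1).choose (del-1) : ℕ) : ℚ[X])
                * ((gcoef lam del (m+1) k : ℕ) : ℚ[X]) := by
        rw [hg]
        push_cast
        ring
      simp only [map_mul, map_pow, map_neg, map_one, map_natCast]
      rw [hgc]
      simp only [Finset.mul_sum, Finset.sum_mul]
      refine Finset.sum_congr rfl fun k hk => ?_
      simp only [hF]
      ring
end

section
/- For every n ≥ 1, applying (x∘I)ⁿ to the constant polynomial 1 gives (x∘I)ⁿ(1)(x) = Σ_{k=0}^{n−1} (−1)^k a(n−1,k) · x^{2n} / (n+k)!, where a(n,k) are the Bessel numbers; equivalently (x∘I)ⁿ(1) = c_n · x^{2n} for some rational c_n. -/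
open Polynomial Finset

/-- The Bessel numbers (OEIS A001498). -/
def bessel : ℕ → ℕ → ℕ
  | 0, 0 => 1
  | 0, _ + 1 => 0
  | n + 1, 0 => bessel n 0
  | n + 1, k + 1 =>
      if n + 1 < k + 1 then 0
      else bessel n (k + 1) + ((n + 1) - (k + 1) + 1) * bessel (n + 1) k
  termination_by n k => (n, k)

lemma bessel_zero_right : ∀ n, bessel n 0 = 1
  | 0 => by rw [bessel]
  | n + 1 => by rw [bessel]; exact bessel_zero_right n

lemma bessel_eq_zero : ∀ n k, n < k → bessel n k = 0
  | 0, k+1, _ => by rw [bessel]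
  | n+1, k+1, h => by rw [bessel]; rw [if_pos h]

lemma bessel_rec (n k : ℕ) (h : k ≤ n) :
    bessel (n+1) (k+1) = bessel n (k+1) + (n - k + 1) * bessel (n+1) k := by
  rw [bessel, if_neg (by omega), Nat.succ_sub_succ]

lemma bessel_closed : ∀ n, ∀ k ≤ n,
    2 ^ k * k.factorial * (n - k).factorial * bessel n k = (n + k).factorial := by
  intro n
  induction n with
  | zero => intro k hk; interval_cases k; simp [bessel_zero_right]
  | succ n ih =>
    intro k
    induction k with
    | zero => intro _; simp [bessel_zero_right]
    | succ k ihk =>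
      intro hk
      have hkn : k ≤ n := by omega
      rw [bessel_rec n k hkn, Nat.succ_sub_succ]
      have hB : 2 ^ k * k.factorial * (n + 1 - k).factorial * bessel (n+1) k
          = (n + 1 + k).factorial := ihk (by omega)
      have hfac : (n + 1 - k).factorial = (n - k + 1) * (n - k).factorial := by
        rw [show n + 1 - k = (n - k) + 1 by omega, Nat.factorial_succ]
      have hA : 2 ^ (k+1) * (k+1).factorial * (n - k).factorial * bessel n (k+1)
          = (n - k) * (n + 1 + k).factorial := by
        rcases Nat.lt_or_ge k n with hlt | hge
        · have h1 : 2 ^ (k+1) * (k+1).factorial * (n - (k+1)).factorial * bessel n (k+1)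
              = (n + (k+1)).factorial := ih (k+1) (by omega)
          have h2 : (n - k).factorial = (n - k) * (n - (k+1)).factorial := by
            rw [show n - k = (n - (k+1)) + 1 by omega, Nat.factorial_succ]
          calc 2 ^ (k+1) * (k+1).factorial * (n - k).factorial * bessel n (k+1)
              = (n - k) * (2 ^ (k+1) * (k+1).factorial * (n - (k+1)).factorial * bessel n (k+1)) := by
                rw [h2]; ring
            _ = (n - k) * (n + 1 + k).factorial := by rw [h1, show n + (k+1) = n + 1 + k from by omega]
        · have hkeq : k = n := by omega
          subst hkeq
          rw [bessel_eq_zero k (k+1) (by omega)]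
          simp
      calc 2 ^ (k+1) * (k+1).factorial * (n - k).factorial *
            (bessel n (k+1) + (n - k + 1) * bessel (n+1) k)
          = 2 ^ (k+1) * (k+1).factorial * (n - k).factorial * bessel n (k+1)
            + 2 * (k+1) * (2 ^ k * k.factorial * ((n - k + 1) * (n - k).factorial) * bessel (n+1) k) := by
            rw [Nat.factorial_succ (k)]; ring
        _ = (n - k) * (n + 1 + k).factorial + 2 * (k+1) * (n + 1 + k).factorial := by
            rw [hA, ← hfac, hB]
        _ = (n + 1 + (k + 1)).factorial := by
            rw [show n + 1 + (k+1) = (n + 1 + k) + 1 by omega, Nat.factorial_succ]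
            have : n - k + 2 * (k + 1) = n + 1 + k + 1 := by omega
            nlinarith [this]

lemma besselQ (n k : ℕ) (h : k ≤ n) :
    (bessel n k : ℚ) = ((n+k).factorial : ℚ) / (2^k * (k.factorial : ℚ) * ((n-k).factorial : ℚ)) := by
  have h1 := bessel_closed n k h
  have h2 : ((2:ℚ)^k * (k.factorial : ℚ) * ((n-k).factorial : ℚ)) ≠ 0 := by positivity
  rw [eq_div_iff h2]
  exact_mod_cast by rw [← h1]; ring

noncomputable def gfun (n j : ℕ) : ℚ :=
  (-1)^(j+1) * (2*j) / (2^j * (j.factorial : ℚ) * ((n-j).factorial : ℚ) * ((n:ℚ)+j))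

lemma gfun_zero (n : ℕ) : gfun n 0 = 0 := by simp [gfun]

lemma step (m k : ℕ) (hk : k ≤ m) :
    (2*(m:ℚ)+3) * ((-1)^k * (bessel (m+1) k : ℚ) / ((m+2+k).factorial : ℚ))
      - (-1)^k * (bessel m k : ℚ) / ((m+1+k).factorial : ℚ)
    = gfun (m+1) (k+1) - gfun (m+1) k := by
  obtain ⟨d, rfl⟩ : ∃ d, m = k + d := ⟨m - k, by omega⟩
  rw [besselQ _ _ (by omega : k ≤ k + d + 1), besselQ _ _ (by omega : k ≤ k + d)]
  simp only [gfun]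
  rw [show k+d+1-(k+1) = d by omega, show k+d+1-k = d+1 by omega,
      show k+d+1+k = (k+d+k)+1 by omega, show k+d+2+k = ((k+d+k)+1)+1 by omega,
      show k+d-k = d by omega, show k+d+k = k+d+k from rfl]
  simp only [Nat.factorial_succ]
  push_cast
  have h1 : ((k+d+k).factorial : ℚ) ≠ 0 := by positivity
  have h2 : (k.factorial : ℚ) ≠ 0 := by positivity
  have h3 : (d.factorial : ℚ) ≠ 0 := by positivity
  have h4 : ((2:ℚ))^k ≠ 0 := by positivity
  have h5 : (k:ℚ)+d+k+1 ≠ 0 := by positivity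
  have h6 : (k:ℚ)+d+k+1+1 ≠ 0 := by positivity
  have h7 : (k:ℚ)+d+1+(k+1) ≠ 0 := by positivity
  have h8 : (k:ℚ)+d+1+k ≠ 0 := by positivity
  have h9 : (d:ℚ)+1 ≠ 0 := by positivity
  have h10 : (k:ℚ)+1 ≠ 0 := by positivity
  field_simp
  ring

noncomputable def Tsum (n : ℕ) : ℚ :=
  ∑ k ∈ Finset.range n, (-1 : ℚ) ^ k * (bessel (n - 1) k : ℚ) / (Nat.factorial (n + k) : ℚ)

lemma Trec (m : ℕ) : (2*(m:ℚ)+3) * Tsum (m+2) = Tsum (m+1) := by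
  have hz : (bessel m (m+1) : ℚ) = 0 := by
    rw [bessel_eq_zero m (m+1) (by omega)]; simp
  have hT1 : Tsum (m+1) = ∑ k ∈ Finset.range (m+2),
      (-1:ℚ)^k * (bessel m k : ℚ) / ((m+1+k).factorial : ℚ) := by
    rw [Finset.sum_range_succ, hz]
    simp [Tsum]
  have hT2 : Tsum (m+2) = ∑ k ∈ Finset.range (m+2),
      (-1:ℚ)^k * (bessel (m+1) k : ℚ) / ((m+2+k).factorial : ℚ) := by
    simp [Tsum]
  rw [hT1, hT2, Finset.mul_sum, ← sub_eq_zero, ← Finset.sum_sub_distrib,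
      Finset.sum_range_succ]
  have hstep : ∑ k ∈ Finset.range (m+1),
      ((2*(m:ℚ)+3) * ((-1)^k * (bessel (m+1) k : ℚ) / ((m+2+k).factorial : ℚ))
        - (-1)^k * (bessel m k : ℚ) / ((m+1+k).factorial : ℚ))
      = gfun (m+1) (m+1) - gfun (m+1) 0 := by
    rw [← Finset.sum_range_sub (fun j => gfun (m+1) j)]
    exact Finset.sum_congr rfl (fun k hk => step m k (by
      have := Finset.mem_range.mp hk; omega))
  rw [hstep, gfun_zero, sub_zero, hz, besselQ (m+1) (m+1) le_rfl]
  simp only [gfun, Nat.sub_self, Nat.factorial_zero]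
  rw [show m+1+(m+1) = (m+(m+1))+1 by omega, show m+2+(m+1) = ((m+(m+1))+1)+1 by omega]
  simp only [Nat.factorial_succ]
  push_cast
  have h1 : ((m+(m+1)).factorial : ℚ) ≠ 0 := by positivity
  have h2 : ((m+1).factorial : ℚ) ≠ 0 := by positivity
  have h4 : ((2:ℚ))^(m+1) ≠ 0 := by positivity
  have h5 : (m:ℚ)+(m+1)+1 ≠ 0 := by positivity
  have h6 : (m:ℚ)+(m+1)+1+1 ≠ 0 := by positivity
  have h7 : (m:ℚ)+1+(m+1) ≠ 0 := by positivity
  field_simp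
  ring

lemma Tclosed : ∀ m : ℕ, Tsum (m+1) = ∏ j ∈ Finset.range (m+1), ((2*(j:ℚ)+1))⁻¹ := by
  intro m
  induction m with
  | zero => simp [Tsum, bessel_zero_right]
  | succ m ih =>
    have hne : (2*(m:ℚ)+3) ≠ 0 := by positivity
    have := Trec m
    rw [ih] at this
    rw [Finset.prod_range_succ, ← this]
    push_cast
    field_simp
    ring

lemma intOp_mono (c : ℚ) (m : ℕ) :
    intOp (C c * X ^ m) = C (c / ((m:ℚ) + 1)) * X ^ (m + 1) := by
  rw [C_mul_X_pow_eq_monomial, intOp, Polynomial.sum_monomial_index]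
  simp

lemma iterEq (n : ℕ) : (fun g => X * intOp g)^[n] (1 : Polynomial ℚ)
    = C (∏ j ∈ Finset.range n, (2*(j:ℚ)+1)⁻¹) * X ^ (2*n) := by
  induction n with
  | zero => simp
  | succ n ih =>
    rw [Function.iterate_succ_apply', ih]
    have hc : (∏ j ∈ Finset.range n, (2*(j:ℚ)+1)⁻¹) / (((2*n : ℕ):ℚ)+1)
        = ∏ j ∈ Finset.range (n+1), (2*(j:ℚ)+1)⁻¹ := by
      rw [Finset.prod_range_succ]
      push_cast
      rw [div_eq_mul_inv]
    rw [intOp_mono, hc]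
    ring

theorem xI_pow_on_one (n : ℕ) (hn : 1 ≤ n) :
    (fun g => X * intOp g)^[n] (1 : Polynomial ℚ) =
      (∑ k ∈ Finset.range n,
        Polynomial.C ((-1 : ℚ) ^ k * (bessel (n - 1) k : ℚ) / (Nat.factorial (n + k) : ℚ))) *
        X ^ (2 * n) ∧
    ∃ c : ℚ, (fun g => X * intOp g)^[n] (1 : Polynomial ℚ) = Polynomial.C c * X ^ (2 * n) := by
  obtain ⟨m, rfl⟩ : ∃ m, n = m + 1 := ⟨n - 1, by omega⟩
  have hsum : (∑ k ∈ Finset.range (m+1),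
      Polynomial.C ((-1 : ℚ) ^ k * (bessel (m+1-1) k : ℚ) / (Nat.factorial (m+1+k) : ℚ)))
      = C (Tsum (m+1)) := by
    rw [Tsum]
    exact (map_sum C _ _).symm
  constructor
  · rw [iterEq, hsum, Tclosed]
  · exact ⟨_, iterEq (m+1)⟩
end
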